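/- arXiv:2110.14537 — 3 statements merged into one kernel-verified Lean document; each statement's English description precedes it below -/
import Mathlib

section
/- Let (Ω, 𝓕, ℙ) be a probability space and let M : Ω → ℕ be a measurable random variable with M ≥ 1 almost surely. Let p > 0 be a real number with p < E[M], where the expectation E[M] ∈ (0,∞] is taken in the extended sense (it may be infinite). Then there exists ε > 0 such that for every x ∈ (0,1], E[1 − (1−x)^M] ≥ min(p x, ε). -/
/-!
Write `1 - (1 - x) ^ m = x * ∑_{k < m} (1 - x) ^ k`. The geometric sum increases to `m` as `x ↓ 0`,
so by monotone convergence `E[∑_{k < M} (1 - x₀) ^ k] > p` for some `x₀ ∈ (0, 1]`; take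
`ε = E[1 - (1 - x₀) ^ M] > p x₀`. For `x ≥ x₀` the integrand is at least its value at `x₀`, and for
`x ≤ x₀` the ratio `(1 - (1 - x) ^ m) / x` is at least its value at `x₀`, which gives `p x`.
-/

open MeasureTheory Filter Topology Finset
open scoped ENNReal

theorem one_sub_one_sub_pow_eq_mul_geom_sum {R : Type*} [Ring R] (x : R) (m : ℕ) :
    1 - (1 - x) ^ m = x * ∑ k ∈ range m, (1 - x) ^ k := by
  rw [← mul_neg_geom_sum, sub_sub_cancel]

section Real

variable {x y : ℝ}

theorem geom_sum_one_sub_le_of_le (hxy : x ≤ y) (hy : y ≤ 1) (m : ℕ) :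
    ∑ k ∈ range m, (1 - y) ^ k ≤ ∑ k ∈ range m, (1 - x) ^ k :=
  sum_le_sum fun k _ => pow_le_pow_left₀ (by linarith) (by linarith) k

theorem one_sub_one_sub_pow_le_of_le (hxy : x ≤ y) (hy : y ≤ 1) (m : ℕ) :
    1 - (1 - x) ^ m ≤ 1 - (1 - y) ^ m :=
  sub_le_sub_left (pow_le_pow_left₀ (by linarith) (by linarith) m) 1

theorem mem_Icc_one_sub_one_sub_pow (hx : x ∈ Set.Icc (0 : ℝ) 1) (m : ℕ) :
    1 - (1 - x) ^ m ∈ Set.Icc (0 : ℝ) 1 := by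
  have h₀ : 0 ≤ (1 - x) ^ m := pow_nonneg (by linarith [hx.2]) m
  have h₁ : (1 - x) ^ m ≤ 1 := pow_le_one₀ (by linarith [hx.2]) (by linarith [hx.1])
  constructor <;> linarith

theorem mul_one_sub_one_sub_pow_le (hx : 0 ≤ x) (hxy : x ≤ y) (hy : y ≤ 1) (m : ℕ) :
    x * (1 - (1 - y) ^ m) ≤ y * (1 - (1 - x) ^ m) := by
  rw [one_sub_one_sub_pow_eq_mul_geom_sum, one_sub_one_sub_pow_eq_mul_geom_sum,
    mul_left_comm x y]
  exact mul_le_mul_of_nonneg_left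
    (mul_le_mul_of_nonneg_left (geom_sum_one_sub_le_of_le hxy hy m) hx) (hx.trans hxy)

end Real

section Integral

variable {Ω : Type*} [MeasurableSpace Ω] {μ : Measure Ω} {M : Ω → ℕ} {x y : ℝ}

theorem tendsto_lintegral_geom_sum_one_sub (hM : Measurable M) :
    Tendsto (fun n : ℕ => ∫⁻ ω, ENNReal.ofReal
        (∑ k ∈ range (M ω), (1 - 1 / ((n : ℝ) + 1)) ^ k) ∂μ) atTop (𝓝 (∫⁻ ω, M ω ∂μ)) := by
  refine lintegral_tendsto_of_tendsto_of_monotone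
    (fun n => by fun_prop) (ae_of_all _ fun ω a b hab => ?_)
    (ae_of_all _ fun ω => ?_)
  · exact ENNReal.ofReal_le_ofReal <| geom_sum_one_sub_le_of_le (Nat.one_div_le_one_div hab)
      (by simpa using Nat.one_div_le_one_div (α := ℝ) (Nat.zero_le a)) _
  · have hcont : Continuous fun t : ℝ => ENNReal.ofReal (∑ k ∈ range (M ω), (1 - t) ^ k) :=
      ENNReal.continuous_ofReal.comp (by fun_prop)
    simpa [Function.comp_def] using
      (hcont.tendsto 0).comp tendsto_one_div_add_atTop_nhds_zero_nat

theorem exists_lt_lintegral_geom_sum_one_sub (hM : Measurable M) {a : ℝ≥0∞}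
    (ha : a < ∫⁻ ω, M ω ∂μ) :
    ∃ x ∈ Set.Ioc (0 : ℝ) 1, a < ∫⁻ ω, ENNReal.ofReal (∑ k ∈ range (M ω), (1 - x) ^ k) ∂μ := by
  obtain ⟨n, hn⟩ := ((tendsto_lintegral_geom_sum_one_sub hM).eventually_const_lt ha).exists
  exact ⟨1 / ((n : ℝ) + 1), ⟨by positivity,
    by simpa using Nat.one_div_le_one_div (α := ℝ) (Nat.zero_le n)⟩, hn⟩

variable [IsFiniteMeasure μ]

theorem integrable_one_sub_one_sub_pow (hM : Measurable M) (hx : x ∈ Set.Icc (0 : ℝ) 1) :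
    Integrable (fun ω => 1 - (1 - x) ^ M ω) μ := by
  refine .of_bound (by fun_prop) 1 (ae_of_all _ fun ω => ?_)
  have h := mem_Icc_one_sub_one_sub_pow hx (M ω)
  rw [Real.norm_of_nonneg h.1]
  exact h.2

theorem ofReal_integral_one_sub_one_sub_pow (hM : Measurable M) (hx : x ∈ Set.Icc (0 : ℝ) 1) :
    ENNReal.ofReal (∫ ω, 1 - (1 - x) ^ M ω ∂μ) =
      ENNReal.ofReal x * ∫⁻ ω, ENNReal.ofReal (∑ k ∈ range (M ω), (1 - x) ^ k) ∂μ := by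
  rw [ofReal_integral_eq_lintegral_ofReal (integrable_one_sub_one_sub_pow hM hx)
      (ae_of_all _ fun ω => (mem_Icc_one_sub_one_sub_pow hx (M ω)).1),
    ← lintegral_const_mul _ (by fun_prop)]
  refine lintegral_congr fun ω => ?_
  rw [← ENNReal.ofReal_mul hx.1, one_sub_one_sub_pow_eq_mul_geom_sum]

theorem integral_one_sub_one_sub_pow_mono (hM : Measurable M) (hx : 0 ≤ x) (hxy : x ≤ y)
    (hy : y ≤ 1) :
    ∫ ω, 1 - (1 - x) ^ M ω ∂μ ≤ ∫ ω, 1 - (1 - y) ^ M ω ∂μ :=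
  integral_mono (integrable_one_sub_one_sub_pow hM ⟨hx, hxy.trans hy⟩)
    (integrable_one_sub_one_sub_pow hM ⟨hx.trans hxy, hy⟩)
    fun ω => one_sub_one_sub_pow_le_of_le hxy hy (M ω)

theorem mul_integral_one_sub_one_sub_pow_le (hM : Measurable M) (hx : 0 ≤ x) (hxy : x ≤ y)
    (hy : y ≤ 1) :
    x * ∫ ω, 1 - (1 - y) ^ M ω ∂μ ≤ y * ∫ ω, 1 - (1 - x) ^ M ω ∂μ := by
  rw [← integral_const_mul, ← integral_const_mul]
  exact integral_mono ((integrable_one_sub_one_sub_pow hM ⟨hx.trans hxy, hy⟩).const_mul x)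
    ((integrable_one_sub_one_sub_pow hM ⟨hx, hxy.trans hy⟩).const_mul y)
    fun ω => mul_one_sub_one_sub_pow_le hx hxy hy (M ω)

end Integral

theorem pemantle_binomial_general
    {Ω : Type*} [MeasurableSpace Ω] (ℙ : Measure Ω) [IsProbabilityMeasure ℙ]
    (M : Ω → ℕ) (hM : Measurable M)
    (p : ℝ)
    (hpE : ENNReal.ofReal p < ∫⁻ ω, (M ω : ℝ≥0∞) ∂ℙ) :
    ∃ ε > 0, ∀ x ∈ Set.Ioc (0:ℝ) 1,
      min (p * x) ε ≤ ∫ ω, (1 - (1 - x) ^ (M ω)) ∂ℙ := by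
  obtain ⟨x₀, ⟨hx₀, hx₀₁⟩, hlt⟩ := exists_lt_lintegral_geom_sum_one_sub hM hpE
  set ε := ∫ ω, 1 - (1 - x₀) ^ M ω ∂ℙ
  obtain ⟨hpε, hε⟩ : p * x₀ < ε ∧ 0 < ε := by
    rw [← ENNReal.ofReal_lt_ofReal_iff', ofReal_integral_one_sub_one_sub_pow hM ⟨hx₀.le, hx₀₁⟩,
      ENNReal.ofReal_mul' hx₀.le, mul_comm]
    exact ENNReal.mul_lt_mul_right (ENNReal.ofReal_pos.mpr hx₀).ne' ENNReal.ofReal_ne_top hlt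
  refine ⟨ε, hε, fun x ⟨hx, hx₁⟩ => ?_⟩
  rcases le_total x x₀ with hxx₀ | hx₀x
  · have hratio := mul_integral_one_sub_one_sub_pow_le (μ := ℙ) hM hx.le hxx₀ hx₀₁
    exact (min_le_left _ _).trans (by nlinarith)
  · exact (min_le_right _ _).trans (integral_one_sub_one_sub_pow_mono hM hx₀.le hx₀x hx₁)

/-- Pemantle's binomial lemma (Lemma 2.3 of Pemantle 1992), in expectation form:
if `M ≥ 1` a.s. and `p < E[M]` (extended expectation), then there is `ε > 0` with
`E[1 - (1-x)^M] ≥ min (p x) ε` for all `x ∈ (0,1]`. -/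
theorem pemantle_binomial
    {Ω : Type*} [MeasurableSpace Ω] (ℙ : Measure Ω) [IsProbabilityMeasure ℙ]
    (M : Ω → ℕ) (hM : Measurable M)
    (hM1 : ∀ᵐ ω ∂ℙ, 1 ≤ M ω)
    (p : ℝ) (hp : 0 < p)
    (hpE : ENNReal.ofReal p < ∫⁻ ω, (M ω : ℝ≥0∞) ∂ℙ) :
    ∃ ε > 0, ∀ x ∈ Set.Ioc (0:ℝ) 1,
      min (p * x) ε ≤ ∫ ω, (1 - (1 - x) ^ (M ω)) ∂ℙ :=
  pemantle_binomial_general ℙ M hM p hpE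
end

section
/- Let ξ be an ℕ-valued random variable and F a nonnegative real random variable defined on a common probability space, with ξ and F independent. Suppose ξ is unbounded, i.e. for every k ∈ ℕ there exists k' ≥ k with ℙ(ξ = k') > 0, and suppose there exists c̃ > 0 with E[e^{c̃ F}] = ∞. Then for every c > 0, E[e^{c ξ F}] = ∞. -/
/-!
On the event `{ξ = k}`, which has positive probability, `e^{c ξ F} = e^{c k F}`, and by
independence the expectation of `e^{c k F}` restricted to that event is `ℙ(ξ = k) E[e^{c k F}]`.
Since `ξ` is unbounded we may take `c k ≥ c̃`, and then `E[e^{c k F}] ≥ E[e^{c̃ F}] = ∞` as `F ≥ 0`.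
-/

open MeasureTheory ProbabilityTheory
open scoped ENNReal

theorem ProbabilityTheory.IndepFun.setLIntegral_preimage_comp_eq_mul
    {Ω α β : Type*} {mΩ : MeasurableSpace Ω} {μ : Measure Ω}
    [MeasurableSpace α] [MeasurableSpace β] {X : Ω → α} {Y : Ω → β}
    (hX : Measurable X) (hY : Measurable Y) (hXY : IndepFun X Y μ)
    {s : Set α} (hs : MeasurableSet s) {g : β → ℝ≥0∞} (hg : Measurable g) :
    ∫⁻ ω in X ⁻¹' s, g (Y ω) ∂μ = μ (X ⁻¹' s) * ∫⁻ ω, g (Y ω) ∂μ := by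
  have hind : IndepFun (fun ω => s.indicator (1 : α → ℝ≥0∞) (X ω)) (fun ω => g (Y ω)) μ :=
    hXY.comp (measurable_one.indicator hs) hg
  calc ∫⁻ ω in X ⁻¹' s, g (Y ω) ∂μ
      = ∫⁻ ω, s.indicator (1 : α → ℝ≥0∞) (X ω) * g (Y ω) ∂μ := by
        rw [← lintegral_indicator (hX hs)]
        congr 1 with ω
        by_cases hω : X ω ∈ s <;> simp [hω]
    _ = (∫⁻ ω, s.indicator (1 : α → ℝ≥0∞) (X ω) ∂μ) * ∫⁻ ω, g (Y ω) ∂μ :=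
        lintegral_mul_eq_lintegral_mul_lintegral_of_indepFun''
          ((measurable_one.indicator hs).comp hX).aemeasurable (hg.comp hY).aemeasurable hind
    _ = μ (X ⁻¹' s) * ∫⁻ ω, g (Y ω) ∂μ := by
        rw [← lintegral_indicator_one (hX hs)]
        rfl

theorem lintegral_ofReal_exp_mul_eq_top_of_le
    {Ω : Type*} [MeasurableSpace Ω] {μ : Measure Ω} {F : Ω → ℝ} (hF0 : ∀ᵐ ω ∂μ, 0 ≤ F ω)
    {a b : ℝ} (hab : a ≤ b) (ha : ∫⁻ ω, ENNReal.ofReal (Real.exp (a * F ω)) ∂μ = ⊤) :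
    ∫⁻ ω, ENNReal.ofReal (Real.exp (b * F ω)) ∂μ = ⊤ := by
  refine top_le_iff.mp (ha ▸ lintegral_mono_ae ?_)
  filter_upwards [hF0] with ω hω
  gcongr

theorem no_exp_tails_of_product_general
    {Ω : Type*} [MeasurableSpace Ω] (μ : Measure Ω)
    (ξ : Ω → ℕ) (F : Ω → ℝ) (hξ : Measurable ξ) (hF : Measurable F)
    (hind : IndepFun ξ F μ)
    (hF0 : ∀ᵐ ω ∂μ, 0 ≤ F ω)
    (hunb : ∀ k : ℕ, ∃ k' : ℕ, k ≤ k' ∧ 0 < μ {ω | ξ ω = k'})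
    (ctil : ℝ)
    (hinf : ∫⁻ ω, ENNReal.ofReal (Real.exp (ctil * F ω)) ∂μ = ⊤) :
    ∀ c : ℝ, 0 < c → ∫⁻ ω, ENNReal.ofReal (Real.exp (c * (ξ ω : ℝ) * F ω)) ∂μ = ⊤ := by
  intro c hc
  obtain ⟨k, hk, hk_pos⟩ := hunb ⌈ctil / c⌉₊
  have hck : ctil ≤ c * k :=
    (div_le_iff₀' hc).mp ((Nat.le_ceil _).trans (Nat.cast_le.mpr hk))
  have h_top : ∫⁻ ω, ENNReal.ofReal (Real.exp (c * k * F ω)) ∂μ = ⊤ :=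
    lintegral_ofReal_exp_mul_eq_top_of_le hF0 hck hinf
  have h_event : ∫⁻ ω in ξ ⁻¹' {k}, ENNReal.ofReal (Real.exp (c * (ξ ω : ℝ) * F ω)) ∂μ = ⊤ := by
    rw [setLIntegral_congr_fun (hξ (measurableSet_singleton k)) fun ω (hω : ξ ω = k) => by rw [hω],
      hind.setLIntegral_preimage_comp_eq_mul hξ hF (measurableSet_singleton k)
        (measurable_const_mul (c * k)).exp.ennreal_ofReal, h_top]
    exact ENNReal.mul_top hk_pos.ne'
  exact top_le_iff.mp (h_event ▸ setLIntegral_le_lintegral _ _)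

/-- Remark after Theorem 2.2: if the offspring distribution `ξ` is unbounded and the
fitness `F` has some infinite exponential moment, then the product `ξ · F` has no
exponential moments at all. -/
theorem no_exp_tails_of_product
    {Ω : Type*} [MeasurableSpace Ω] (μ : Measure Ω) [IsProbabilityMeasure μ]
    (ξ : Ω → ℕ) (F : Ω → ℝ) (hξ : Measurable ξ) (hF : Measurable F)
    (hind : IndepFun ξ F μ)
    (hF0 : ∀ᵐ ω ∂μ, 0 ≤ F ω)
    (hunb : ∀ k : ℕ, ∃ k' : ℕ, k ≤ k' ∧ 0 < μ {ω | ξ ω = k'})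
    (ctil : ℝ) (hctil : 0 < ctil)
    (hinf : ∫⁻ ω, ENNReal.ofReal (Real.exp (ctil * F ω)) ∂μ = ⊤) :
    ∀ c : ℝ, 0 < c → ∫⁻ ω, ENNReal.ofReal (Real.exp (c * (ξ ω : ℝ) * F ω)) ∂μ = ⊤ :=
  no_exp_tails_of_product_general μ ξ F hξ hF hind hF0 hunb ctil hinf
end

section
/- Let α > 1 and let ξ be an ℕ-valued random variable with ℙ(ξ = k) = η e^{−k^α} for every k ∈ ℕ, where η = (Σ_{k ∈ ℕ} e^{−k^α})^{−1} is the normalizing constant. Let β ∈ (0,1] and let F be a real random variable with F ≥ 1 almost surely and ℙ(F > f) = exp(−f^β) for every real f ≥ 1, with ξ and F independent. Then for every c > 0, E[e^{c ξ F}] = ∞. -/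
open MeasureTheory ProbabilityTheory
open scoped ENNReal

/-- Remark after Theorem 2.3: with `P(ξ = k) = η e^{-k^α}` (`α > 1`) and
`P(F > f) = e^{-f^β}` (`β ∈ (0,1]`), `ξ` and `F` independent, the product `ξ · F`
has no exponential moments. -/
theorem counterexample_product_no_exp_moment
    {Ω : Type*} [MeasurableSpace Ω] (μ : Measure Ω) [IsProbabilityMeasure μ]
    (ξ : Ω → ℕ) (F : Ω → ℝ) (hξ : Measurable ξ) (hF : Measurable F)
    (hind : IndepFun ξ F μ)
    (α : ℝ) (hα : 1 < α)
    (η : ℝ) (hη : η = (∑' k : ℕ, Real.exp (-((k : ℝ) ^ α)))⁻¹)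
    (hpmf : ∀ k : ℕ, μ {ω | ξ ω = k} = ENNReal.ofReal (η * Real.exp (-((k : ℝ) ^ α))))
    (β : ℝ) (hβ0 : 0 < β) (hβ1 : β ≤ 1)
    (hF1 : ∀ᵐ ω ∂μ, 1 ≤ F ω)
    (htail : ∀ f : ℝ, 1 ≤ f → μ {ω | f < F ω} = ENNReal.ofReal (Real.exp (-(f ^ β)))) :
    ∀ c : ℝ, 0 < c → ∫⁻ ω, ENNReal.ofReal (Real.exp (c * (ξ ω : ℝ) * F ω)) ∂μ = ⊤ := by
  intro c hc
  -- summability of the pmf weights, hence positivity of η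
  have hsum : Summable (fun k : ℕ => Real.exp (-((k : ℝ) ^ α))) := by
    refine Summable.of_nonneg_of_le (fun n => (Real.exp_pos _).le) (fun n => ?_)
      (summable_geometric_of_lt_one (Real.exp_pos (-1)).le
        (Real.exp_lt_one_iff.mpr (by norm_num)))
    have h1 : ((n : ℝ)) ≤ (n : ℝ) ^ α := by
      rcases Nat.eq_zero_or_pos n with h | h
      · simp [h, Real.zero_rpow (by positivity : α ≠ 0)]
      · have hn1 : (1 : ℝ) ≤ (n : ℝ) := by exact_mod_cast h
        calc (n : ℝ) = (n : ℝ) ^ (1 : ℝ) := (Real.rpow_one _).symm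
          _ ≤ (n : ℝ) ^ α := Real.rpow_le_rpow_of_exponent_le hn1 hα.le
    calc Real.exp (-((n : ℝ) ^ α)) ≤ Real.exp (-(n : ℝ)) :=
          Real.exp_le_exp.mpr (by linarith)
      _ = Real.exp (-1) ^ n := by
          rw [← Real.exp_nat_mul]; ring_nf
  have hη0 : 0 < η := by
    rw [hη]
    exact inv_pos.mpr (Summable.tsum_pos hsum (fun n => (Real.exp_pos _).le) 0 (Real.exp_pos _))
  -- choose k with c * k > 1
  set k : ℕ := ⌊1 / c⌋₊ + 1 with hk
  have hck : 1 < c * k := by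
    have h1 : (1 / c : ℝ) < k := by
      have := Nat.lt_floor_add_one (1 / c)
      push_cast [hk]
      push_cast at this
      linarith
    have := mul_lt_mul_of_pos_left h1 hc
    rwa [mul_one_div_cancel hc.ne'] at this
  set a : ℝ := c * k - 1 with ha
  have ha0 : 0 < a := by simp [ha]; linarith
  set C : ℝ := η * Real.exp (-((k : ℝ) ^ α)) with hC
  have hC0 : 0 < C := mul_pos hη0 (Real.exp_pos _)
  refine ENNReal.eq_top_of_forall_nnreal_le fun r => ?_
  set f : ℝ := max 1 (Real.log ((r : ℝ) / C) / a) with hf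
  have hf1 : (1 : ℝ) ≤ f := le_max_left _ _
  have hf0 : (0 : ℝ) < f := lt_of_lt_of_le one_pos hf1
  -- the event A
  set A : Set Ω := (ξ ⁻¹' {k}) ∩ (F ⁻¹' Set.Ioi f) with hA
  have hAmeas : MeasurableSet A :=
    (hξ (measurableSet_singleton k)).inter (hF measurableSet_Ioi)
  have hμA : μ A = ENNReal.ofReal C * ENNReal.ofReal (Real.exp (-(f ^ β))) := by
    rw [hA, hind.measure_inter_preimage_eq_mul _ _ (measurableSet_singleton k)
      measurableSet_Ioi]
    have h1 : ξ ⁻¹' {k} = {ω | ξ ω = k} := rfl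
    have h2 : F ⁻¹' Set.Ioi f = {ω | f < F ω} := rfl
    rw [h1, h2, hpmf k, htail f hf1, hC]
  -- key chain of inequalities
  have key : ENNReal.ofReal (C * Real.exp (a * f)) ≤
      ∫⁻ ω, ENNReal.ofReal (Real.exp (c * (ξ ω : ℝ) * F ω)) ∂μ := by
    have hfβ : f ^ β ≤ f := by
      calc f ^ β ≤ f ^ (1 : ℝ) := Real.rpow_le_rpow_of_exponent_le hf1 hβ1
        _ = f := Real.rpow_one f
    have hreal : C * Real.exp (a * f) ≤ Real.exp (c * k * f) * (C * Real.exp (-(f ^ β))) := by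
      have hexp : a * f ≤ c * k * f + -(f ^ β) := by rw [ha]; nlinarith
      calc C * Real.exp (a * f)
          ≤ C * (Real.exp (c * k * f) * Real.exp (-(f ^ β))) := by
            rw [← Real.exp_add]
            exact mul_le_mul_of_nonneg_left (Real.exp_le_exp.mpr hexp) hC0.le
        _ = Real.exp (c * k * f) * (C * Real.exp (-(f ^ β))) := by ring
    calc ENNReal.ofReal (C * Real.exp (a * f))
        ≤ ENNReal.ofReal (Real.exp (c * k * f) * (C * Real.exp (-(f ^ β)))) :=
          ENNReal.ofReal_le_ofReal hreal
      _ = ENNReal.ofReal (Real.exp (c * k * f)) * μ A := by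
          rw [hμA, ENNReal.ofReal_mul (Real.exp_pos _).le, ENNReal.ofReal_mul hC0.le]
      _ = ∫⁻ _ω in A, ENNReal.ofReal (Real.exp (c * k * f)) ∂μ := by
          rw [setLIntegral_const]
      _ ≤ ∫⁻ ω in A, ENNReal.ofReal (Real.exp (c * (ξ ω : ℝ) * F ω)) ∂μ := by
          refine setLIntegral_mono' hAmeas fun ω hω => ?_
          obtain ⟨hω1, hω2⟩ := hω
          have hξω : ξ ω = k := hω1
          have hFω : f < F ω := hω2
          refine ENNReal.ofReal_le_ofReal (Real.exp_le_exp.mpr ?_)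
          rw [hξω]
          have hck0 : 0 < c * (k : ℝ) := lt_trans one_pos hck
          calc c * (k : ℝ) * f ≤ c * (k : ℝ) * F ω :=
                mul_le_mul_of_nonneg_left hFω.le hck0.le
            _ = c * (k : ℝ) * F ω := rfl
      _ ≤ ∫⁻ ω, ENNReal.ofReal (Real.exp (c * (ξ ω : ℝ) * F ω)) ∂μ :=
          setLIntegral_le_lintegral _ _
  -- r ≤ C * exp (a * f)
  have hr : (r : ℝ) ≤ C * Real.exp (a * f) := by
    have h1 : Real.log ((r : ℝ) / C) ≤ a * f := by
      have : Real.log ((r : ℝ) / C) / a ≤ f := le_max_right _ _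
      calc Real.log ((r : ℝ) / C) = a * (Real.log ((r : ℝ) / C) / a) := by
            field_simp
        _ ≤ a * f := mul_le_mul_of_nonneg_left this ha0.le
    calc (r : ℝ) = C * ((r : ℝ) / C) := by field_simp
      _ ≤ C * Real.exp (Real.log ((r : ℝ) / C)) :=
          mul_le_mul_of_nonneg_left (Real.le_exp_log _) hC0.le
      _ ≤ C * Real.exp (a * f) :=
          mul_le_mul_of_nonneg_left (Real.exp_le_exp.mpr h1) hC0.le
  calc (r : ℝ≥0∞) = ENNReal.ofReal (r : ℝ) := ENNReal.ofReal_coe_nnreal.symm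
    _ ≤ ENNReal.ofReal (C * Real.exp (a * f)) := ENNReal.ofReal_le_ofReal hr
    _ ≤ _ := key
end
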